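/- Let W ⊆ ℙ¹ be an open set and f : W → ℙ¹ a holomorphic map. Every repelling periodic point of f lies in the Julia set J_F(f); hence J_R(f) ⊆ J_F(f), where J_R(f) is the closure of the set of repelling periodic points of f. -/

import Mathlib

open Topology Filter Metric OnePoint Classical

noncomputable section

abbrev RS := OnePoint ℂ

/-- Read off the finite coordinate of a point of the Riemann sphere (junk value `0` at `∞`). -/
def toC (x : RS) : ℂ := if h : ∃ z : ℂ, x = (z : RS) then h.choose else 0

/-- The standard chart of the Riemann sphere at a point `p`: the identity chart at finite
points, the inversion `z ↦ 1/z` at `∞`. -/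
def rsChart (p : RS) (x : RS) : ℂ :=
  if p = (∞ : RS) then (if x = (∞ : RS) then 0 else (toC x)⁻¹) else toC x

/-- The inverse of the standard chart at `p`. -/
def rsChartSymm (p : RS) (z : ℂ) : RS :=
  if p = (∞ : RS) then (if z = 0 then (∞ : RS) else ((z⁻¹ : ℂ) : RS)) else (z : RS)

/-- A map `f : W → ℙ¹` is holomorphic if it is continuous on `W` and its readings in the
standard charts are analytic. -/
def HolomorphicOnRS (f : RS → RS) (W : Set RS) : Prop :=
  ContinuousOn f W ∧ ∀ x ∈ W,
    AnalyticAt ℂ (fun z : ℂ => rsChart (f x) (f (rsChartSymm x z))) (rsChart x x)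

/-- The family of iterates of `f` is normal on `U`: the iterates, as continuous maps
`U → ℙ¹`, form a relatively compact family in the compact-open topology. -/
def IsNormalOn (f : RS → RS) (U : Set RS) : Prop :=
  ∃ F : ℕ → C(U, RS), (∀ (n : ℕ) (x : U), F n x = f^[n] (x : RS)) ∧
    IsCompact (closure (Set.range F))

/-- The Fatou set of `f : W → ℙ¹`: union of the open sets on which either all iterates stay
in `W` and are normal, or some iterate escapes `ℙ¹ ∖ closure W`. -/
def fatouSet (f : RS → RS) (W : Set RS) : Set RS :=
  ⋃₀ {U : Set RS | IsOpen U ∧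
      ((∀ n : ℕ, f^[n] '' U ⊆ W) ∧ IsNormalOn f U ∨ ∃ n : ℕ, f^[n] '' U ⊆ (closure W)ᶜ)}

/-- The Julia set `J_F(f)` as the non-normality locus. -/
def juliaSet (f : RS → RS) (W : Set RS) : Set RS := (fatouSet f W)ᶜ

/-- The derivative of `f^[n]` at `x`, computed in the standard charts. -/
def iterDerivAt (f : RS → RS) (n : ℕ) (x : RS) : ℂ :=
  deriv (fun z : ℂ => rsChart (f^[n] x) (f^[n] (rsChartSymm x z))) (rsChart x x)

/-- `x` is a repelling periodic point of `f : W → ℙ¹`. -/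
def IsRepellingPeriodic (f : RS → RS) (W : Set RS) (x : RS) : Prop :=
  ∃ n : ℕ, 1 ≤ n ∧ f^[n] x = x ∧ (∀ k : ℕ, f^[k] x ∈ W) ∧ 1 < ‖iterDerivAt f n x‖

/-- The Julia set `J_R(f)`: closure of the set of repelling periodic points. -/
def repJulia (f : RS → RS) (W : Set RS) : Set RS :=
  closure {x : RS | IsRepellingPeriodic f W x}

/-- The small island property: for every `z₀ ∈ ℂ*` there is `r(z₀) > 0` such that every
domain `U` meeting `∂W` contains a set `Ω ⋐ U ∩ W` mapped conformally onto `D(z₀, r(z₀))`. -/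
def SmallIslandProperty (f : RS → RS) (W : Set RS) : Prop :=
  ∀ z₀ : ℂ, z₀ ≠ 0 → ∃ r : ℝ, 0 < r ∧
    ∀ U : Set RS, IsOpen U → IsPreconnected U → (U ∩ frontier W).Nonempty →
      ∃ Ω : Set RS, IsOpen Ω ∧ closure Ω ⊆ U ∩ W ∧ IsCompact (closure Ω) ∧
        Set.BijOn f Ω ((fun z : ℂ => (z : RS)) '' Metric.ball z₀ r)

/-
Suppose `x` is fixed by `g = f^[n]` and lies in an open set `U` on which the iterates of `f` stay
in `W` and form a normal family. Compactness of the family gives equicontinuity at `x`: in the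
chart at `x`, some disc of radius `δ` is mapped by every `g^[k]` into the unit disc around `x`.
Cauchy's estimate then gives `|g'(x)|^k = |(g^[k])'(x)| ≤ 1/δ` for all `k`, so `x` is not
repelling. A periodic orbit inside `W` never enters the complement of `closure W` either, and the
Julia set is closed, so it also contains the closure of the repelling periodic points.
-/

lemma IsCompact.eventually_forall_apply_mem {X Y : Type*} [TopologicalSpace X]
    [LocallyCompactSpace X] [TopologicalSpace Y] {K : Set C(X, Y)} (hK : IsCompact K) {x : X}
    {N : Set Y} (hN : ∀ h ∈ K, N ∈ 𝓝 (h x)) : ∀ᶠ u in 𝓝 x, ∀ h ∈ K, h u ∈ N :=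
  hK.eventually_forall_of_forall_eventually (P := fun u h => h u ∈ N) fun h hh =>
    (continuous_eval.comp continuous_swap).continuousAt.eventually_mem (hN h hh)

-- The only point outside the domain of the chart `rsChart p`.
def rsChartPole (p : RS) : RS := if p = ∞ then ((0 : ℂ) : RS) else ∞

@[simp] lemma toC_coe (z : ℂ) : toC z = z := by
  have h : ∃ w : ℂ, (z : RS) = w := ⟨z, rfl⟩
  rw [toC, dif_pos h]
  exact (coe_injective h.choose_spec).symm

@[simp] lemma toC_infty : toC ∞ = 0 := by
  simp [toC]

@[simp] lemma rsChart_infty_coe (z : ℂ) : rsChart ∞ z = z⁻¹ := by simp [rsChart]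

lemma rsChart_infty_comp_coe : rsChart ∞ ∘ ((↑) : ℂ → RS) = fun z => z⁻¹ :=
  funext rsChart_infty_coe

@[simp] lemma rsChart_infty_infty : rsChart ∞ ∞ = 0 := by simp [rsChart]

@[simp] lemma rsChart_coe (a : ℂ) (x : RS) : rsChart a x = toC x := by simp [rsChart]

@[simp] lemma rsChartSymm_infty (z : ℂ) :
    rsChartSymm ∞ z = if z = 0 then ∞ else ((z⁻¹ : ℂ) : RS) := by simp [rsChartSymm]

@[simp] lemma rsChartSymm_coe (a z : ℂ) : rsChartSymm a z = z := by simp [rsChartSymm]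

@[simp] lemma rsChartPole_infty : rsChartPole ∞ = ((0 : ℂ) : RS) := by simp [rsChartPole]

@[simp] lemma rsChartPole_coe (a : ℂ) : rsChartPole a = ∞ := by simp [rsChartPole]

lemma self_ne_rsChartPole (p : RS) : p ≠ rsChartPole p := by
  cases p using OnePoint.rec <;> simp

lemma rsChartSymm_ne_rsChartPole (p : RS) (z : ℂ) : rsChartSymm p z ≠ rsChartPole p := by
  cases p using OnePoint.rec with
  | infty => by_cases hz : z = 0 <;> simp [hz]
  | coe a => simp

@[simp] lemma rsChart_rsChartSymm (p : RS) (z : ℂ) : rsChart p (rsChartSymm p z) = z := by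
  cases p using OnePoint.rec with
  | infty => by_cases hz : z = 0 <;> simp [hz]
  | coe a => simp

lemma rsChartSymm_rsChart {p x : RS} (hx : x ≠ rsChartPole p) :
    rsChartSymm p (rsChart p x) = x := by
  cases p using OnePoint.rec with
  | infty =>
    cases x using OnePoint.rec with
    | infty => simp
    | coe c =>
      have hc : c ≠ 0 := by rintro rfl; simp at hx
      simp [hc]
  | coe a =>
    cases x using OnePoint.rec with
    | infty => simp at hx
    | coe c => simp

lemma continuous_rsChartSymm (p : RS) : Continuous (rsChartSymm p) := by
  cases p using OnePoint.rec with
  | infty =>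
    refine continuous_iff_continuousAt.2 fun z => ?_
    by_cases hz : z = 0
    · subst hz
      rw [continuousAt_iff_punctured_nhds, rsChartSymm_infty, if_pos rfl]
      have hinv : Tendsto (fun w : ℂ => ((w⁻¹ : ℂ) : RS)) (𝓝[≠] 0) (𝓝 ∞) := by
        refine tendsto_coe_infty.comp ?_
        rw [coclosedCompact_eq_cocompact, ← cobounded_eq_cocompact]
        exact tendsto_inv₀_nhdsNE_zero
      refine hinv.congr' ?_
      filter_upwards [self_mem_nhdsWithin] with w (hw : w ≠ 0)
      simp [hw]
    · have hinv : ContinuousAt (fun w : ℂ => ((w⁻¹ : ℂ) : RS)) z :=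
        continuous_coe.continuousAt.comp (continuousAt_inv₀ hz)
      refine hinv.congr ?_
      filter_upwards [isOpen_ne.mem_nhds hz] with w hw
      simp [hw]
  | coe a =>
    exact continuous_coe.congr fun z => (rsChartSymm_coe a z).symm

lemma continuousAt_rsChart {p x : RS} (hx : x ≠ rsChartPole p) : ContinuousAt (rsChart p) x := by
  cases p using OnePoint.rec with
  | infty =>
    cases x using OnePoint.rec with
    | infty =>
      rw [continuousAt_infty', rsChart_infty_infty, rsChart_infty_comp_coe,
        coclosedCompact_eq_cocompact, ← cobounded_eq_cocompact]
      exact tendsto_inv₀_cobounded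
    | coe c =>
      have hc : c ≠ 0 := by rintro rfl; simp at hx
      rw [continuousAt_coe, rsChart_infty_comp_coe]
      exact continuousAt_inv₀ hc
  | coe a =>
    cases x using OnePoint.rec with
    | infty => simp at hx
    | coe c =>
      rw [continuousAt_coe]
      have : rsChart a ∘ OnePoint.some = id := funext fun c => by simp
      rw [this]
      exact continuousAt_id

def AnalyticInCharts (g : RS → RS) (p q y : RS) : Prop :=
  AnalyticAt ℂ (fun z => rsChart q (g (rsChartSymm p z))) (rsChart p y)

lemma analyticInCharts_id {p q y : RS} (hp : y ≠ rsChartPole p) (hq : y ≠ rsChartPole q) :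
    AnalyticInCharts id p q y := by
  cases p using OnePoint.rec with
  | infty =>
    cases q using OnePoint.rec with
    | infty => exact analyticAt_id.congr (.of_forall fun z => by simp [-rsChartSymm_infty])
    | coe b =>
      cases y using OnePoint.rec with
      | infty => simp at hq
      | coe c =>
        have hc : c ≠ 0 := by rintro rfl; simp at hp
        refine (analyticAt_id.inv (by simpa using hc)).congr (.of_forall fun z => ?_)
        by_cases hz : z = 0 <;> simp [hz]
  | coe a =>
    cases q using OnePoint.rec with
    | infty =>
      cases y using OnePoint.rec with
      | infty => simp at hp
      | coe c =>
        have hc : c ≠ 0 := by rintro rfl; simp at hq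
        exact (analyticAt_id.inv (by simpa using hc)).congr (.of_forall fun z => by simp)
    | coe b => exact analyticAt_id.congr (.of_forall fun z => by simp)

lemma AnalyticInCharts.comp {g h : RS → RS} {p r q y : RS} (hh : AnalyticInCharts h r q (g y))
    (hg : AnalyticInCharts g p r y) (hgc : ContinuousAt g y) (hy : y ≠ rsChartPole p)
    (hgy : g y ≠ rsChartPole r) : AnalyticInCharts (h ∘ g) p q y := by
  unfold AnalyticInCharts at hh hg ⊢
  have hψ : rsChartSymm p (rsChart p y) = y := rsChartSymm_rsChart hy
  refine (hh.comp_of_eq hg (by rw [hψ])).congr ?_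
  have hgψ : ContinuousAt (g ∘ rsChartSymm p) (rsChart p y) :=
    (hψ ▸ hgc).comp (continuous_rsChartSymm p).continuousAt
  filter_upwards [hgψ.eventually_ne (by rwa [Function.comp_apply, hψ])] with z hz
  simp only [Function.comp_apply] at hz ⊢
  rw [rsChartSymm_rsChart hz]

lemma AnalyticInCharts.change_charts {g : RS → RS} {p q y : RS}
    (hg : AnalyticInCharts g y (g y) y) (hgc : ContinuousAt g y) (hp : y ≠ rsChartPole p)
    (hq : g y ≠ rsChartPole q) : AnalyticInCharts g p q y :=
  -- `g = id ∘ g ∘ id`, the two `id`s read as chart transitions `p → y` and `g y → q`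
  ((analyticInCharts_id (self_ne_rsChartPole _) hq).comp hg hgc (self_ne_rsChartPole y)
      (self_ne_rsChartPole _)).comp (g := id)
    (analyticInCharts_id hp (self_ne_rsChartPole y)) continuousAt_id hp (self_ne_rsChartPole y)

lemma rsChart_iterate_rsChartSymm {g : RS → RS} {x : RS} {z : ℂ}
    (hz : ∀ k, g^[k] (rsChartSymm x z) ≠ rsChartPole x) (k : ℕ) :
    rsChart x (g^[k] (rsChartSymm x z)) = (fun w => rsChart x (g (rsChartSymm x w)))^[k] z := by
  induction k with
  | zero => simp
  | succ k ih =>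
    rw [Function.iterate_succ_apply', Function.iterate_succ_apply', ← ih,
      rsChartSymm_rsChart (hz k)]

def chartDisc (x : RS) (r : ℝ) : Set RS :=
  {w | w ≠ rsChartPole x ∧ rsChart x w ∈ ball (rsChart x x) r}

lemma chartDisc_mem_nhds (x : RS) {r : ℝ} (hr : 0 < r) : chartDisc x r ∈ 𝓝 x :=
  inter_mem (compl_singleton_mem_nhds (self_ne_rsChartPole x))
    ((continuousAt_rsChart (self_ne_rsChartPole x)).preimage_mem_nhds (ball_mem_nhds _ hr))

section Iterates

open Set

variable {f : RS → RS} {W U : Set RS}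

lemma continuousOn_iterate (hf : ContinuousOn f W) (hUW : ∀ m, MapsTo f^[m] U W) (m : ℕ) :
    ContinuousOn f^[m] U := by
  induction m with
  | zero => exact continuousOn_id
  | succ m ih =>
    rw [Function.iterate_succ']
    exact hf.comp ih (hUW m)

lemma analyticInCharts_iterate (hf : HolomorphicOnRS f W) (hU : IsOpen U)
    (hUW : ∀ m, MapsTo f^[m] U W) {y : RS} (hy : y ∈ U) (m : ℕ) :
    AnalyticInCharts f^[m] y (f^[m] y) y := by
  induction m with
  | zero => exact analyticInCharts_id (self_ne_rsChartPole y) (self_ne_rsChartPole y)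
  | succ m ih =>
    rw [Function.iterate_succ']
    have hcont := (continuousOn_iterate hf.1 hUW m).continuousAt (hU.mem_nhds hy)
    exact AnalyticInCharts.comp (hf.2 _ (hUW m hy)) ih hcont (self_ne_rsChartPole y)
      (self_ne_rsChartPole _)

lemma analyticInCharts_iterate_of_mem (hf : HolomorphicOnRS f W) (hU : IsOpen U)
    (hUW : ∀ m, MapsTo f^[m] U W) {m : ℕ} {p q y : RS} (hy : y ∈ U)
    (hp : y ≠ rsChartPole p) (hq : f^[m] y ≠ rsChartPole q) : AnalyticInCharts f^[m] p q y :=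
  (analyticInCharts_iterate hf hU hUW hy m).change_charts
    ((continuousOn_iterate hf.1 hUW m).continuousAt (hU.mem_nhds hy)) hp hq

lemma norm_iterDerivAt_pow_le (hf : HolomorphicOnRS f W) (hU : IsOpen U)
    (hUW : ∀ m, MapsTo f^[m] U W) {x : RS} (hxU : x ∈ U) {n : ℕ} (hfix : f^[n] x = x)
    {δ : ℝ} (hδ : 0 < δ) (hball : ∀ z ∈ ball (rsChart x x) δ,
      rsChartSymm x z ∈ U ∧ ∀ k, f^[n * k] (rsChartSymm x z) ∈ chartDisc x 1) (k : ℕ) :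
    ‖iterDerivAt f n x‖ ^ k ≤ 1 / δ := by
  set z₀ := rsChart x x
  set h : ℂ → ℂ := fun z => rsChart x (f^[n] (rsChartSymm x z))
  have hψ : rsChartSymm x z₀ = x := rsChartSymm_rsChart (self_ne_rsChartPole x)
  have hh : HasDerivAt h (iterDerivAt f n x) z₀ := by
    have hana := analyticInCharts_iterate hf hU hUW hxU n
    rw [hfix] at hana
    rw [iterDerivAt, hfix]
    exact hana.differentiableAt.hasDerivAt
  have hz₀ : h z₀ = z₀ := by
    show rsChart x (f^[n] (rsChartSymm x z₀)) = z₀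
    rw [hψ, hfix]
  have hreading : ∀ z ∈ ball z₀ δ, rsChart x (f^[n * k] (rsChartSymm x z)) = h^[k] z := by
    intro z hz
    rw [Function.iterate_mul]
    refine rsChart_iterate_rsChartSymm (fun j => ?_) k
    rw [← Function.iterate_mul]
    exact ((hball z hz).2 j).1
  have hdiff : DifferentiableOn ℂ (h^[k]) (ball z₀ δ) := by
    refine DifferentiableOn.congr (fun z hz => ?_) (fun z hz => (hreading z hz).symm)
    have hana := analyticInCharts_iterate_of_mem hf hU hUW (hball z hz).1
      (rsChartSymm_ne_rsChartPole x z) ((hball z hz).2 k).1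
    rw [AnalyticInCharts, rsChart_rsChartSymm] at hana
    exact hana.differentiableAt.differentiableWithinAt
  have hmaps : MapsTo (h^[k]) (ball z₀ δ) (closedBall (h^[k] z₀) 1) := by
    intro z hz
    rw [Function.iterate_fixed hz₀, ← hreading z hz]
    exact ball_subset_closedBall ((hball z hz).2 k).2
  calc ‖iterDerivAt f n x‖ ^ k = ‖deriv (h^[k]) z₀‖ := by
        rw [(hh.iterate _ hz₀ k).deriv, norm_pow]
    _ ≤ 1 / δ := Complex.norm_deriv_le_div_of_mapsTo_ball hdiff hmaps hδ

lemma not_isNormalOn_of_repelling (hf : HolomorphicOnRS f W) (hU : IsOpen U)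
    (hUW : ∀ m, MapsTo f^[m] U W) {x : RS} (hxU : x ∈ U) {n : ℕ} (hfix : f^[n] x = x)
    (hrep : 1 < ‖iterDerivAt f n x‖) : ¬ IsNormalOn f U := by
  rintro ⟨F, hF, hK⟩
  have := hU.locallyCompactSpace
  have hfixed : IsCompact {h ∈ closure (range F) | h ⟨x, hxU⟩ = x} :=
    hK.inter_right (isClosed_eq (continuous_eval_const _) continuous_const)
  have horbit : ∀ᶠ u : U in 𝓝 ⟨x, hxU⟩, ∀ k, f^[n * k] (u : RS) ∈ chartDisc x 1 := by
    filter_upwards [hfixed.eventually_forall_apply_mem (N := chartDisc x 1) fun h hh => by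
      rw [hh.2]; exact chartDisc_mem_nhds x one_pos] with u hu k
    rw [← hF]
    refine hu _ ⟨subset_closure ⟨n * k, rfl⟩, ?_⟩
    rw [hF, Function.iterate_mul, Function.iterate_fixed hfix]
  replace horbit := (eventually_nhds_subtype_iff U ⟨x, hxU⟩
    fun y => ∀ k, f^[n * k] y ∈ chartDisc x 1).1 horbit
  rw [hU.nhdsWithin_eq hxU] at horbit
  have hψ := (continuous_rsChartSymm x).continuousAt (x := rsChart x x)
  rw [ContinuousAt, rsChartSymm_rsChart (self_ne_rsChartPole x)] at hψ
  obtain ⟨δ, hδ, hball⟩ :=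
    eventually_nhds_iff_ball.1 (hψ.eventually ((hU.eventually_mem hxU).and horbit))
  obtain ⟨k, hk⟩ := pow_unbounded_of_one_lt (1 / δ) hrep
  exact (norm_iterDerivAt_pow_le hf hU hUW hxU hfix hδ hball k).not_gt hk

end Iterates

lemma isClosed_juliaSet (f : RS → RS) (W : Set RS) : IsClosed (juliaSet f W) :=
  (isOpen_sUnion fun _ hU => hU.1).isClosed_compl

theorem stmt3_general (f : RS → RS) (W : Set RS) (hf : HolomorphicOnRS f W) :
    (∀ x : RS, IsRepellingPeriodic f W x → x ∈ juliaSet f W) ∧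
    repJulia f W ⊆ juliaSet f W := by
  have hrep : ∀ x, IsRepellingPeriodic f W x → x ∈ juliaSet f W := by
    rintro x ⟨n, -, hfix, horbit, hrepel⟩ ⟨U, ⟨hU, ⟨hUW, hnormal⟩ | ⟨m, hescape⟩⟩, hxU⟩
    · exact not_isNormalOn_of_repelling hf hU (fun m => Set.mapsTo_iff_image_subset.2 (hUW m))
        hxU hfix hrepel hnormal
    · exact hescape ⟨x, hxU, rfl⟩ (subset_closure (horbit m))
  exact ⟨hrep, closure_minimal hrep (isClosed_juliaSet f W)⟩

/-- repelling periodic points lie in the Julia set, hence `J_R(f) ⊆ J_F(f)`. -/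
theorem stmt3 (f : RS → RS) (W : Set RS) (hW : IsOpen W) (hf : HolomorphicOnRS f W) :
    (∀ x : RS, IsRepellingPeriodic f W x → x ∈ juliaSet f W) ∧
    repJulia f W ⊆ juliaSet f W :=
  stmt3_general f W hf
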